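/- For the linear time-varying system ẋ = −Γ Λ(t)^T Λ(t) x with Γ symmetric positive definite, the quadratic function V(x,t) = x^T P(t) x with P(t) = (T/2)Γ^{-1} + ∫_{t-T}^{t}(s−t+T)Φ(s,t)^T Λ(s)^T Λ(s)Φ(s,t) ds has time derivative along trajectories equal to V̇ = −x^T M(t) x, where M(t) = ∫_{t-T}^{t} Φ(s,t)^T Λ(s)^T Λ(s) Φ(s,t) ds is the observability Gramian. In particular, if M(t) ≥ ι̲₃ I then V̇ ≤ −ι̲₃ ‖x‖². -/

import Mathlib

/-!
Along a trajectory the transition matrix carries `x t` back to `x s`, so the Gramian integrand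
`x(t)ᵀ Φ(s,t)ᵀ Λ(s)ᵀ Λ(s) Φ(s,t) x(t)` collapses to `h(s) = |Λ(s) x(s)|²`, independent of `t`.
Hence `xᵀ M x = ∫_{t-T}^t h` and `V(t) = (T/2) xᵀ Γ⁻¹ x + ∫_{t-T}^t (s - t + T) h(s) ds`.
The first term decreases at rate `T h(t)`, because `Γ⁻¹` cancels the `Γ` of the dynamics; by
Leibniz' rule the second increases at rate `T h(t) - ∫_{t-T}^t h`.
-/

open Matrix

section Calculus

variable {𝕜 : Type*} [NontriviallyNormedField 𝕜] {m n : Type*} [Fintype n] {t : 𝕜}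

theorem HasDerivAt.dotProduct {u v : 𝕜 → n → 𝕜} {u' v' : n → 𝕜}
    (hu : HasDerivAt u u' t) (hv : HasDerivAt v v' t) :
    HasDerivAt (fun τ => u τ ⬝ᵥ v τ) (u' ⬝ᵥ v t + u t ⬝ᵥ v') t :=
  (HasDerivAt.fun_sum (u := Finset.univ) fun i _ =>
    (hasDerivAt_pi.1 hu i).fun_mul (hasDerivAt_pi.1 hv i)).congr_deriv Finset.sum_add_distrib

theorem HasDerivAt.matrix_mulVec [Fintype m] {A : 𝕜 → Matrix m n 𝕜} {A' : Matrix m n 𝕜}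
    {v : 𝕜 → n → 𝕜} {v' : n → 𝕜}
    (hA : ∀ i, HasDerivAt (fun τ => A τ i) (A' i) t) (hv : HasDerivAt v v' t) :
    HasDerivAt (fun τ => A τ *ᵥ v τ) (A' *ᵥ v t + A t *ᵥ v') t :=
  hasDerivAt_pi.2 fun i => (hA i).dotProduct hv

theorem HasDerivAt.dotProduct_mulVec_self {S : Matrix n n 𝕜} (hS : S.IsSymm)
    {x : 𝕜 → n → 𝕜} {x' : n → 𝕜} (hx : HasDerivAt x x' t) :
    HasDerivAt (fun τ => x τ ⬝ᵥ S *ᵥ x τ) (2 * (x t ⬝ᵥ S *ᵥ x')) t := by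
  have hSx : HasDerivAt (fun τ => S *ᵥ x τ) (S *ᵥ x') t := by
    simpa using HasDerivAt.matrix_mulVec (A' := 0) (fun i => hasDerivAt_const t (S i)) hx
  convert hx.dotProduct hSx using 1
  rw [← dotProduct_transpose_mulVec, hS.eq]
  ring

end Calculus

section

variable {m n : Type*} [Fintype n]

theorem dotProduct_transpose_mul_self_mulVec [Fintype m] {R : Type*} [CommSemiring R]
    (B : Matrix m n R) (v : n → R) :
    v ⬝ᵥ (Bᵀ * B) *ᵥ v = (B *ᵥ v) ⬝ᵥ (B *ᵥ v) := by
  rw [← mulVec_mulVec, dotProduct_transpose_mulVec]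

theorem Matrix.PosSemidef.mul_dotProduct_self_le [DecidableEq n] {M : Matrix n n ℝ} {c : ℝ}
    (h : (M - c • 1).PosSemidef) (v : n → ℝ) : c * (v ⬝ᵥ v) ≤ v ⬝ᵥ M *ᵥ v := by
  have := h.dotProduct_mulVec_nonneg v
  rw [star_trivial, sub_mulVec, smul_mulVec, one_mulVec, dotProduct_sub, dotProduct_smul,
    smul_eq_mul] at this
  linarith

theorem Matrix.PosDef.hasDerivAt_dotProduct_inv_mulVec_self {p : Type*} [Fintype p]
    [DecidableEq n] {Γ : Matrix n n ℝ} (hΓ : Γ.PosDef) {L : Matrix p n ℝ} {x : ℝ → n → ℝ}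
    {t : ℝ} (hx : HasDerivAt x (-((Γ * Lᵀ * L) *ᵥ x t)) t) :
    HasDerivAt (fun τ => x τ ⬝ᵥ Γ⁻¹ *ᵥ x τ) (-(2 * ((L *ᵥ x t) ⬝ᵥ (L *ᵥ x t)))) t := by
  have hcancel : x t ⬝ᵥ Γ⁻¹ *ᵥ (-((Γ * Lᵀ * L) *ᵥ x t)) = -((L *ᵥ x t) ⬝ᵥ (L *ᵥ x t)) := by
    rw [mulVec_neg, dotProduct_neg, mulVec_mulVec, Matrix.mul_assoc Γ,
      nonsing_inv_mul_cancel_left _ _ (isUnit_iff_isUnit_det _ |>.1 hΓ.isUnit),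
      dotProduct_transpose_mul_self_mulVec]
  have := hx.dotProduct_mulVec_self (isHermitian_iff_isSymm.1 hΓ.isHermitian).inv
  rwa [hcancel, mul_neg] at this

theorem transition_mulVec_eq [DecidableEq n] {A : ℝ → Matrix n n ℝ} {Φ : ℝ → ℝ → Matrix n n ℝ}
    {x : ℝ → n → ℝ} (hΦdiag : ∀ t, Φ t t = 1)
    (hΦ : ∀ s t i j, HasDerivAt (fun τ => Φ s τ i j) ((Φ s t * A t) i j) t)
    (hx : ∀ t, HasDerivAt x (-(A t *ᵥ x t)) t) (s t : ℝ) :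
    Φ s t *ᵥ x t = x s := by
  have hconst : ∀ τ, HasDerivAt (fun τ => Φ s τ *ᵥ x τ) 0 τ := fun τ => by
    simpa only [mulVec_neg, mulVec_mulVec, add_neg_cancel] using
      HasDerivAt.matrix_mulVec (A := Φ s) (A' := Φ s τ * A τ)
        (fun i => hasDerivAt_pi.2 (hΦ s τ i)) (hx τ)
  have := is_const_of_deriv_eq_zero (fun τ => (hconst τ).differentiableAt)
    (fun τ => (hconst τ).deriv) t s
  rwa [hΦdiag, one_mulVec] at this

theorem dotProduct_mulVec_eq_intervalIntegral [Fintype m] {N : Matrix m n ℝ}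
    {g : ℝ → Matrix m n ℝ} {a b : ℝ}
    (hg : ∀ i j, IntervalIntegrable (fun s => g s i j) MeasureTheory.volume a b)
    (hN : ∀ i j, N i j = ∫ s in a..b, g s i j) (u : m → ℝ) (v : n → ℝ) :
    u ⬝ᵥ N *ᵥ v = ∫ s in a..b, u ⬝ᵥ g s *ᵥ v := by
  have hint : ∀ i j, IntervalIntegrable (fun s => u i * (g s i j * v j)) MeasureTheory.volume a b :=
    fun i j => ((hg i j).mul_const _).const_mul _
  have expand (K : Matrix m n ℝ) : u ⬝ᵥ K *ᵥ v = ∑ i, ∑ j, u i * (K i j * v j) := by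
    simp only [dotProduct, mulVec, Finset.mul_sum]
  simp_rw [expand]
  rw [intervalIntegral.integral_finsetSum (f := fun i s => ∑ j, u i * (g s i j * v j))
    fun i _ => by simpa only [Finset.sum_fn] using IntervalIntegrable.sum _ fun j _ => hint i j]
  refine Finset.sum_congr rfl fun i _ => ?_
  rw [intervalIntegral.integral_finsetSum fun j _ => hint i j]
  refine Finset.sum_congr rfl fun j _ => ?_
  rw [hN, ← intervalIntegral.integral_mul_const, ← intervalIntegral.integral_const_mul]

theorem Continuous.hasDerivAt_intervalIntegral_sub_const_self {E : Type*} [NormedAddCommGroup E]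
    [NormedSpace ℝ E] [CompleteSpace E] {f : ℝ → E} (hf : Continuous f) (T t : ℝ) :
    HasDerivAt (fun τ => ∫ s in (τ - T)..τ, f s) (f t - f (t - T)) t := by
  have hprim (b : ℝ) := (hf.integral_hasStrictDerivAt 0 b).hasDerivAt
  simpa only [intervalIntegral.integral_interval_sub_left (hf.intervalIntegrable 0 _)
    (hf.intervalIntegrable 0 _)] using (hprim t).fun_sub ((hprim (t - T)).comp_sub_const t T)

theorem Continuous.hasDerivAt_intervalIntegral_ramp_mul {h : ℝ → ℝ} (hh : Continuous h) (T t : ℝ) :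
    HasDerivAt (fun τ => ∫ s in (τ - T)..τ, (s - τ + T) * h s)
      (T * h t - ∫ s in (t - T)..t, h s) t := by
  have hsh : Continuous fun s => s * h s := by fun_prop
  have hsplit : ∀ τ, ∫ s in (τ - T)..τ, (s - τ + T) * h s =
      (∫ s in (τ - T)..τ, s * h s) - (τ - T) * ∫ s in (τ - T)..τ, h s := by
    intro τ
    rw [← intervalIntegral.integral_const_mul, ← intervalIntegral.integral_sub
      (hsh.intervalIntegrable _ _) ((hh.const_mul _).intervalIntegrable _ _)]
    congr 1 with s
    ring
  rw [funext hsplit]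
  exact ((hsh.hasDerivAt_intervalIntegral_sub_const_self T t).fun_sub
    (((hasDerivAt_id' t).sub_const T).fun_mul (hh.hasDerivAt_intervalIntegral_sub_const_self T t))
    ).congr_deriv (by ring)

variable {p : Type*} [Fintype p]

def gramianIntegrand (Λ : ℝ → Matrix p n ℝ) (Φ : ℝ → ℝ → Matrix n n ℝ) (s t : ℝ) :
    Matrix n n ℝ :=
  (Φ s t)ᵀ * (Λ s)ᵀ * Λ s * Φ s t

theorem continuous_gramianIntegrand_apply {Λ : ℝ → Matrix p n ℝ} {Φ : ℝ → ℝ → Matrix n n ℝ}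
    (hΛ : Continuous Λ) {t : ℝ} (hΦ : Continuous fun s => Φ s t) (i j : n) :
    Continuous fun s => gramianIntegrand Λ Φ s t i j :=
  (((hΦ.matrix_transpose.matrix_mul hΛ.matrix_transpose).matrix_mul hΛ).matrix_mul
    hΦ).matrix_elem i j

theorem dotProduct_gramianIntegrand_mulVec {Λ : ℝ → Matrix p n ℝ} {Φ : ℝ → ℝ → Matrix n n ℝ}
    {x : ℝ → n → ℝ} {s t : ℝ} (hflow : Φ s t *ᵥ x t = x s) :
    x t ⬝ᵥ gramianIntegrand Λ Φ s t *ᵥ x t = (Λ s *ᵥ x s) ⬝ᵥ (Λ s *ᵥ x s) := by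
  rw [gramianIntegrand, show (Φ s t)ᵀ * (Λ s)ᵀ * Λ s * Φ s t = (Λ s * Φ s t)ᵀ * (Λ s * Φ s t) by
    simp only [transpose_mul, Matrix.mul_assoc], dotProduct_transpose_mul_self_mulVec,
    ← mulVec_mulVec, hflow]

end

theorem lyapunov_derivative_along_trajectories_general {p m : ℕ}
    (Λ : ℝ → Matrix (Fin p) (Fin m) ℝ)
    (hΛcont : ∀ i j, Continuous fun s => Λ s i j)
    (Γ : Matrix (Fin m) (Fin m) ℝ) (hΓ : Γ.PosDef)
    (T : ℝ)
    (Φ : ℝ → ℝ → Matrix (Fin m) (Fin m) ℝ)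
    (hΦdiag : ∀ t, Φ t t = 1)
    (hΦcont : ∀ t i j, Continuous fun s => Φ s t i j)
    (hΦderiv : ∀ s t i j,
      HasDerivAt (fun τ => Φ s τ i j) ((Φ s t * Γ * (Λ t)ᵀ * Λ t) i j) t)
    (x : ℝ → Fin m → ℝ)
    (hx : ∀ t, HasDerivAt x (-((Γ * (Λ t)ᵀ * Λ t) *ᵥ x t)) t)
    (M : ℝ → Matrix (Fin m) (Fin m) ℝ)
    (hM : ∀ t i j, M t i j =
      ∫ s in (t - T)..t, ((Φ s t)ᵀ * (Λ s)ᵀ * Λ s * Φ s t) i j)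
    (P : ℝ → Matrix (Fin m) (Fin m) ℝ)
    (hP : ∀ t i j, P t i j = ((T / 2) • Γ⁻¹) i j +
      ∫ s in (t - T)..t, (s - t + T) * (((Φ s t)ᵀ * (Λ s)ᵀ * Λ s * Φ s t) i j))
    (ι : ℝ)
    (hMlb : ∀ t, T ≤ t →
      (M t - ι • (1 : Matrix (Fin m) (Fin m) ℝ)).PosSemidef) :
    ∀ t : ℝ,
      HasDerivAt (fun τ => x τ ⬝ᵥ (P τ) *ᵥ x τ) (-(x t ⬝ᵥ (M t) *ᵥ x t)) t ∧
      (T ≤ t → -(x t ⬝ᵥ (M t) *ᵥ x t) ≤ -ι * (x t ⬝ᵥ x t)) := by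
  set h : ℝ → ℝ := fun s => (Λ s *ᵥ x s) ⬝ᵥ (Λ s *ᵥ x s)
  have hΛ : Continuous Λ := continuous_matrix hΛcont
  have hh : Continuous h :=
    have hxc : Continuous x := continuous_iff_continuousAt.2 fun t => (hx t).continuousAt
    (hΛ.matrix_mulVec hxc).dotProduct (hΛ.matrix_mulVec hxc)
  have hflow : ∀ s t, Φ s t *ᵥ x t = x s :=
    transition_mulVec_eq hΦdiag (by simpa only [Matrix.mul_assoc] using hΦderiv) hx
  have hKcont : ∀ t i j, Continuous fun s => gramianIntegrand Λ Φ s t i j := fun t =>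
    continuous_gramianIntegrand_apply hΛ (continuous_matrix (hΦcont t))
  have hKx : ∀ s t, x t ⬝ᵥ gramianIntegrand Λ Φ s t *ᵥ x t = h s := fun s t =>
    dotProduct_gramianIntegrand_mulVec (hflow s t)
  have hMx : ∀ t, x t ⬝ᵥ M t *ᵥ x t = ∫ s in (t - T)..t, h s := fun t => by
    rw [dotProduct_mulVec_eq_intervalIntegral (fun i j => (hKcont t i j).intervalIntegrable _ _)
      (hM t)]
    simp only [hKx]
  have hPx : ∀ t, x t ⬝ᵥ P t *ᵥ x t =
      T / 2 * (x t ⬝ᵥ Γ⁻¹ *ᵥ x t) + ∫ s in (t - T)..t, (s - t + T) * h s := fun t => by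
    let R : Matrix (Fin m) (Fin m) ℝ :=
      of fun i j => ∫ s in (t - T)..t, ((s - t + T) • gramianIntegrand Λ Φ s t) i j
    have hPsplit : P t = (T / 2) • Γ⁻¹ + R := by
      ext i j
      exact hP t i j
    have hRx := dotProduct_mulVec_eq_intervalIntegral (N := R)
      (g := fun s => (s - t + T) • gramianIntegrand Λ Φ s t)
      (fun i j => (((continuous_id.sub continuous_const).add continuous_const).mul
        (hKcont t i j)).intervalIntegrable _ _) (fun i j => rfl) (x t) (x t)
    rw [hPsplit, add_mulVec, dotProduct_add, smul_mulVec, dotProduct_smul, smul_eq_mul, hRx]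
    simp only [smul_mulVec, dotProduct_smul, smul_eq_mul, hKx]
  intro t
  refine ⟨?_, fun ht => ?_⟩
  · rw [funext hPx, hMx]
    exact ((hΓ.hasDerivAt_dotProduct_inv_mulVec_self (hx t)).const_mul (T / 2)).add
      (hh.hasDerivAt_intervalIntegral_ramp_mul T t) |>.congr_deriv (by ring)
  · linarith [(hMlb t ht).mul_dotProduct_self_le (x t)]

/-- For the LTV system `ẋ = −Γ Λ(t)ᵀΛ(t) x` with `Γ` symmetric positive definite, the
quadratic function `V(x,t) = xᵀ P(t) x` with
`P(t) = (T/2)Γ⁻¹ + ∫_{t-T}^{t}(s−t+T)Φ(s,t)ᵀΛ(s)ᵀΛ(s)Φ(s,t) ds` has time derivative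
along trajectories `V̇ = −xᵀ M(t) x` where `M(t)` is the observability Gramian; in
particular, if `M(t) ≥ ι I` then `V̇ ≤ −ι ‖x‖²`. -/
theorem lyapunov_derivative_along_trajectories {p m : ℕ}
    (Λ : ℝ → Matrix (Fin p) (Fin m) ℝ)
    (hΛcont : ∀ i j, Continuous fun s => Λ s i j)
    (Γ : Matrix (Fin m) (Fin m) ℝ) (hΓ : Γ.PosDef)
    (T : ℝ) (hT : 0 < T)
    (Φ : ℝ → ℝ → Matrix (Fin m) (Fin m) ℝ)
    (hΦdiag : ∀ t, Φ t t = 1)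
    (hΦcont : ∀ t i j, Continuous fun s => Φ s t i j)
    (hΦderiv : ∀ s t i j,
      HasDerivAt (fun τ => Φ s τ i j) ((Φ s t * Γ * (Λ t)ᵀ * Λ t) i j) t)
    (x : ℝ → Fin m → ℝ)
    (hx : ∀ t, HasDerivAt x (-((Γ * (Λ t)ᵀ * Λ t) *ᵥ x t)) t)
    (M : ℝ → Matrix (Fin m) (Fin m) ℝ)
    (hM : ∀ t i j, M t i j =
      ∫ s in (t - T)..t, ((Φ s t)ᵀ * (Λ s)ᵀ * Λ s * Φ s t) i j)
    (P : ℝ → Matrix (Fin m) (Fin m) ℝ)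
    (hP : ∀ t i j, P t i j = ((T / 2) • Γ⁻¹) i j +
      ∫ s in (t - T)..t, (s - t + T) * (((Φ s t)ᵀ * (Λ s)ᵀ * Λ s * Φ s t) i j))
    (ι : ℝ) (hι : 0 < ι)
    (hMlb : ∀ t, T ≤ t →
      (M t - ι • (1 : Matrix (Fin m) (Fin m) ℝ)).PosSemidef) :
    ∀ t : ℝ,
      HasDerivAt (fun τ => x τ ⬝ᵥ (P τ) *ᵥ x τ) (-(x t ⬝ᵥ (M t) *ᵥ x t)) t ∧
      (T ≤ t → -(x t ⬝ᵥ (M t) *ᵥ x t) ≤ -ι * (x t ⬝ᵥ x t)) :=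
  lyapunov_derivative_along_trajectories_general Λ hΛcont Γ hΓ T Φ hΦdiag hΦcont hΦderiv x hx M hM P
    hP ι hMlb
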